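/- arXiv:1912.04328 — 2 statements merged into one kernel-verified Lean document; each statement's English description precedes it below -/
import Mathlib

section
/- Every dense complete full subcategory S of an essentially small triangulated category C contains the zero object, is closed under isomorphisms, is closed under finite direct sums, is closed under the shift functor and its inverse, and is closed under extensions (if X → Y → Z → X[1] is a distinguished triangle with X and Z in S, then Y is in S); in other words, S is a dense triangulated subcategory of C. -/
/-!
Grothendieck groups of essentially small triangulated categories.

`K0 C` is the quotient of the free abelian group on the isomorphism classes of objects
of `C` by the subgroup generated by the Euler relations `⟨X⟩ - ⟨Y⟩ + ⟨Z⟩` coming from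
distinguished triangles `X ⟶ Y ⟶ Z ⟶ X⟦1⟧`; `K0.mk C A` is the class `[A]`.
A full subcategory (identified with its set of objects) is *dense* if every object of `C`
is a direct summand of an object of the subcategory, and *complete* if whenever two of
the three objects of a distinguished triangle lie in it, so does the third.
-/

open CategoryTheory CategoryTheory.Limits CategoryTheory.Pretriangulated ZeroObject

universe w v u

namespace TriK0

variable (C : Type u) [Category.{v} C] [HasZeroObject C] [Preadditive C] [HasShift C ℤ]
  [∀ n : ℤ, (shiftFunctor C n).Additive] [Pretriangulated C]

/-- The isomorphism class of an object. -/
def isoCl (A : C) : Quotient (isIsomorphicSetoid C) := Quotient.mk (isIsomorphicSetoid C) A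

/-- The subgroup of Euler relations coming from distinguished triangles. -/
def K0Rels : AddSubgroup (FreeAbelianGroup (Quotient (isIsomorphicSetoid C))) :=
  AddSubgroup.closure
    { x | ∃ T : Triangle C, T ∈ (distTriang C) ∧
        x = FreeAbelianGroup.of (isoCl C T.obj₁) - FreeAbelianGroup.of (isoCl C T.obj₂)
          + FreeAbelianGroup.of (isoCl C T.obj₃) }

/-- The Grothendieck group of the triangulated category `C`. -/
def K0 : Type u := FreeAbelianGroup (Quotient (isIsomorphicSetoid C)) ⧸ K0Rels C

noncomputable instance : AddCommGroup (K0 C) :=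
  QuotientAddGroup.Quotient.addCommGroup _

/-- The class `[A]` of an object `A` in the Grothendieck group. -/
def K0.mk (A : C) : K0 C := QuotientAddGroup.mk (FreeAbelianGroup.of (isoCl C A))

/-- A full subcategory is dense if every object of `C` is a direct summand of an object
of the subcategory. -/
noncomputable def DenseSub (S : Set C) : Prop :=
  ∀ A : C, ∃ X ∈ S, ∃ A' : C, Nonempty (X ≅ A ⊞ A')

/-- A full subcategory is complete if, in any distinguished triangle, whenever two of the
three objects belong to the subcategory, so does the third. -/
def CompleteSub (S : Set C) : Prop :=
  ∀ T ∈ (distTriang C),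
    (T.obj₁ ∈ S → T.obj₂ ∈ S → T.obj₃ ∈ S) ∧
    (T.obj₁ ∈ S → T.obj₃ ∈ S → T.obj₂ ∈ S) ∧
    (T.obj₂ ∈ S → T.obj₃ ∈ S → T.obj₁ ∈ S)

end TriK0

open TriK0

namespace TriK0.CompleteSub

variable {C : Type u} [Category.{v} C] [HasZeroObject C] [Preadditive C] [HasShift C ℤ]
  [∀ n : ℤ, (shiftFunctor C n).Additive] [Pretriangulated C]
  {S : Set C} (hS : CompleteSub C S)
include hS

lemma zero_mem (hne : S.Nonempty) : (0 : C) ∈ S := by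
  obtain ⟨X, hX⟩ := hne
  exact (hS _ (contractible_distinguished X)).1 hX hX

lemma biprod_mem {A B : C} (hA : A ∈ S) (hB : B ∈ S) : (A ⊞ B) ∈ S :=
  (hS _ (binaryBiproductTriangle_distinguished A B)).2.1 hA hB

variable (h0 : (0 : C) ∈ S)
include h0

lemma mem_of_iso {A B : C} (e : A ≅ B) (hA : A ∈ S) : B ∈ S := by
  have hT : Triangle.mk e.hom (0 : B ⟶ 0) 0 ∈ distTriang C :=
    (Triangle.distinguished_iff_of_isZero₃ _ (isZero_zero C)).2 (inferInstanceAs (IsIso e.hom))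
  exact (hS _ hT).2.1 hA h0

-- Both directions use the distinguished triangle `A ⟶ 0 ⟶ A⟦1⟧ ⟶ A⟦1⟧`.
lemma shift_one_mem_iff (A : C) : A⟦(1 : ℤ)⟧ ∈ S ↔ A ∈ S :=
  ⟨fun h ↦ (hS _ (contractible_distinguished₂ A)).2.2 h0 h,
    fun h ↦ (hS _ (contractible_distinguished₂ A)).1 h h0⟩

lemma shift_neg_one_mem {A : C} (hA : A ∈ S) : A⟦(-1 : ℤ)⟧ ∈ S :=
  (hS.shift_one_mem_iff h0 _).1 (hS.mem_of_iso h0 (shiftNegShift A 1).symm hA)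

end TriK0.CompleteSub

/-- Every dense complete full subcategory of a triangulated category contains the zero
object, is closed under isomorphisms, finite direct sums, shifts in both directions,
and extensions: it is a dense triangulated subcategory. -/
theorem dense_complete_is_triangulated_subcategory
    (C : Type u) [Category.{v} C] [HasZeroObject C] [Preadditive C] [HasShift C ℤ]
    [∀ n : ℤ, (shiftFunctor C n).Additive] [Pretriangulated C] [EssentiallySmall.{w} C]
    (S : Set C) (hdense : DenseSub C S) (hcomplete : CompleteSub C S) :
    (0 : C) ∈ S ∧
    (∀ A B : C, (A ≅ B) → A ∈ S → B ∈ S) ∧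
    (∀ A B : C, A ∈ S → B ∈ S → (A ⊞ B) ∈ S) ∧
    (∀ A : C, A ∈ S → (shiftFunctor C (1 : ℤ)).obj A ∈ S) ∧
    (∀ A : C, A ∈ S → (shiftFunctor C (-1 : ℤ)).obj A ∈ S) ∧
    (∀ T ∈ (distTriang C), T.obj₁ ∈ S → T.obj₃ ∈ S → T.obj₂ ∈ S) := by
  obtain ⟨X, hX, -⟩ := hdense 0
  have h0 : (0 : C) ∈ S := hcomplete.zero_mem ⟨X, hX⟩
  exact ⟨h0, fun A B e ↦ hcomplete.mem_of_iso h0 e, fun A B ↦ hcomplete.biprod_mem,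
    fun A ↦ (hcomplete.shift_one_mem_iff h0 A).2, fun A ↦ hcomplete.shift_neg_one_mem h0,
    fun T hT ↦ (hcomplete T hT).2.1⟩
end

section
/- Let C be an essentially small triangulated category and S a dense complete full subcategory of C. Then the relation ~ on isomorphism classes of objects of C, given by A ~ B if and only if there exist objects S_A and S_B in S with A ⊕ S_A ≅ B ⊕ S_B, is an equivalence relation, and the quotient G_S is an abelian group under the binary operation {A} + {B} := {A ⊕ B} with identity element {0}, where the inverse of {A} is {A'} for any object A' with A ⊕ A' in S. -/
/-!
Grothendieck groups of essentially small triangulated categories.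

`K0 C` is the quotient of the free abelian group on the isomorphism classes of objects
of `C` by the subgroup generated by the Euler relations `⟨X⟩ - ⟨Y⟩ + ⟨Z⟩` coming from
distinguished triangles `X ⟶ Y ⟶ Z ⟶ X⟦1⟧`; `K0.mk C A` is the class `[A]`.
A full subcategory (identified with its set of objects) is *dense* if every object of `C`
is a direct summand of an object of the subcategory, and *complete* if whenever two of
the three objects of a distinguished triangle lie in it, so does the third.
-/

open CategoryTheory CategoryTheory.Limits CategoryTheory.Pretriangulated ZeroObject

universe w v u

/-!
Stably equivalent objects are those that become isomorphic after adding objects of `S`. When `S`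
contains `0` and is closed under `⊞`, this is an equivalence relation compatible with `⊞`, and
the isomorphisms expressing associativity, commutativity and unitality of `⊞` make the quotient
a commutative monoid. Every object of `S` is stably equivalent to `0`, so if `A ⊞ A' ∈ S` then
`{A'}` is an additive inverse of `{A}`. A complete subcategory containing some object contains
`0` (contractible triangle `X → X → 0`), is closed under isomorphisms (triangle `X ≅ Y → 0`) and
under `⊞` (split triangle `X → X ⊞ Y → Y`); density then supplies the inverse of every class.
-/

noncomputable abbrev addCommGroupOfIsAddUnit {M : Type*} [hM : AddCommMonoid M]
    (h : ∀ a : M, IsAddUnit a) : AddCommGroup M :=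
  letI : Neg M := ⟨fun a => ((-(h a).addUnit : AddUnits M) : M)⟩
  { hM with
    zsmul := zsmulRec
    neg_add_cancel := fun a => by
      change ((-(h a).addUnit : AddUnits M) : M) + a = 0
      rw [AddUnits.neg_add_eq_iff_eq_add, (h a).addUnit_spec, add_zero] }

namespace TriK0

section Additive

variable {C : Type u} [Category.{v} C] [HasZeroMorphisms C] [HasBinaryBiproducts C]

noncomputable def biprodBiprodBiprodComm (W X Y Z : C) :
    (W ⊞ X) ⊞ (Y ⊞ Z) ≅ (W ⊞ Y) ⊞ (X ⊞ Z) :=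
  biprod.associator W X (Y ⊞ Z) ≪≫
    biprod.mapIso (Iso.refl W) ((biprod.associator X Y Z).symm ≪≫
      biprod.mapIso (biprod.braiding X Y) (Iso.refl Z) ≪≫ biprod.associator Y X Z) ≪≫
    (biprod.associator W Y (X ⊞ Z)).symm

def StableEquiv (S : Set C) (A B : C) : Prop :=
  ∃ SA ∈ S, ∃ SB ∈ S, Nonempty (A ⊞ SA ≅ B ⊞ SB)

lemma StableEquiv.symm {S : Set C} {A B : C} : StableEquiv S A B → StableEquiv S B A
  | ⟨SA, hSA, SB, hSB, ⟨e⟩⟩ => ⟨SB, hSB, SA, hSA, ⟨e.symm⟩⟩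

variable [HasZeroObject C]

structure BiprodClosed (S : Set C) : Prop where
  zero_mem : (0 : C) ∈ S
  biprod_mem : ∀ {X Y : C}, X ∈ S → Y ∈ S → (X ⊞ Y) ∈ S

variable {S : Set C}

namespace StableEquiv

lemma of_iso (hS : BiprodClosed S) {A B : C} (e : A ≅ B) : StableEquiv S A B :=
  ⟨0, hS.zero_mem, 0, hS.zero_mem, ⟨biprod.mapIso e (Iso.refl 0)⟩⟩

lemma of_mem (hS : BiprodClosed S) {X : C} (hX : X ∈ S) : StableEquiv S X 0 :=
  ⟨0, hS.zero_mem, X, hX, ⟨biprod.braiding X 0⟩⟩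

lemma trans (hS : BiprodClosed S) {A B D : C} :
    StableEquiv S A B → StableEquiv S B D → StableEquiv S A D
  | ⟨SA, hSA, SB, hSB, ⟨e⟩⟩, ⟨SB', hSB', SD, hSD, ⟨f⟩⟩ =>
    ⟨SA ⊞ SB', hS.biprod_mem hSA hSB', SD ⊞ SB, hS.biprod_mem hSD hSB, ⟨calc
      A ⊞ (SA ⊞ SB') ≅ (A ⊞ SA) ⊞ SB' := (biprod.associator _ _ _).symm
      _ ≅ (B ⊞ SB) ⊞ SB' := biprod.mapIso e (Iso.refl _)
      _ ≅ B ⊞ (SB' ⊞ SB) :=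
        biprod.associator _ _ _ ≪≫ biprod.mapIso (Iso.refl _) (biprod.braiding _ _)
      _ ≅ (D ⊞ SD) ⊞ SB := (biprod.associator _ _ _).symm ≪≫ biprod.mapIso f (Iso.refl _)
      _ ≅ D ⊞ (SD ⊞ SB) := biprod.associator _ _ _⟩⟩

lemma equivalence (hS : BiprodClosed S) : Equivalence (StableEquiv S) :=
  ⟨fun A => of_iso hS (Iso.refl A), symm, trans hS⟩

lemma biprod (hS : BiprodClosed S) {A A' B B' : C} :
    StableEquiv S A A' → StableEquiv S B B' → StableEquiv S (A ⊞ B) (A' ⊞ B')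
  | ⟨SA, hSA, SA', hSA', ⟨e⟩⟩, ⟨SB, hSB, SB', hSB', ⟨f⟩⟩ =>
    ⟨SA ⊞ SB, hS.biprod_mem hSA hSB, SA' ⊞ SB', hS.biprod_mem hSA' hSB',
      ⟨biprodBiprodBiprodComm _ _ _ _ ≪≫ biprod.mapIso e f ≪≫ biprodBiprodBiprodComm _ _ _ _⟩⟩

end StableEquiv

noncomputable abbrev quotAddCommMonoid (hS : BiprodClosed S) :
    AddCommMonoid (Quot (StableEquiv S)) :=
  letI : Add (Quot (StableEquiv S)) := ⟨Quot.map₂ (· ⊞ ·)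
    (fun A _ _ h => (StableEquiv.of_iso hS (Iso.refl A)).biprod hS h)
    (fun _ _ B h => h.biprod hS (StableEquiv.of_iso hS (Iso.refl B)))⟩
  letI : Zero (Quot (StableEquiv S)) := ⟨Quot.mk _ 0⟩
  { nsmul := nsmulRec
    add_assoc := by
      rintro ⟨A⟩ ⟨B⟩ ⟨D⟩
      exact Quot.sound (StableEquiv.of_iso hS (biprod.associator A B D))
    zero_add := by
      rintro ⟨A⟩
      exact Quot.sound (StableEquiv.of_iso hS (isoZeroBiprod (isZero_zero C)).symm)
    add_zero := by
      rintro ⟨A⟩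
      exact Quot.sound (StableEquiv.of_iso hS (isoBiprodZero (isZero_zero C)).symm)
    add_comm := by
      rintro ⟨A⟩ ⟨B⟩
      exact Quot.sound (StableEquiv.of_iso hS (biprod.braiding A B)) }

noncomputable abbrev quotAddCommGroup (hS : BiprodClosed S)
    (hneg : ∀ A : C, ∃ A', (A ⊞ A') ∈ S) : AddCommGroup (Quot (StableEquiv S)) :=
  letI := quotAddCommMonoid hS
  addCommGroupOfIsAddUnit <| Quot.ind fun A =>
    let ⟨A', hA'⟩ := hneg A
    IsAddUnit.of_add_eq_zero (Quot.mk _ A') (Quot.sound (StableEquiv.of_mem hS hA'))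

end Additive

section Triangulated

variable {C : Type u} [Category.{v} C] [HasZeroObject C] [Preadditive C] [HasShift C ℤ]
  [∀ n : ℤ, (shiftFunctor C n).Additive] [Pretriangulated C] {S : Set C}

namespace CompleteSub

lemma zero_mem_s7 (hS : CompleteSub C S) {X : C} (hX : X ∈ S) : (0 : C) ∈ S :=
  (hS _ (contractible_distinguished X)).1 hX hX

lemma mem_of_iso_s7 (hS : CompleteSub C S) {X Y : C} (hX : X ∈ S) (e : X ≅ Y) : Y ∈ S :=
  have hT : Triangle.mk e.hom (0 : Y ⟶ 0) (0 : 0 ⟶ X⟦(1 : ℤ)⟧) ∈ distTriang C :=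
    (Triangle.distinguished_iff_of_isZero₃ _ (isZero_zero C)).2 (inferInstanceAs (IsIso e.hom))
  (hS _ hT).2.1 hX (hS.zero_mem_s7 hX)

lemma biprod_mem_s7 (hS : CompleteSub C S) {X Y : C} (hX : X ∈ S) (hY : Y ∈ S) : (X ⊞ Y) ∈ S :=
  (hS _ (binaryBiproductTriangle_distinguished X Y)).2.1 hX hY

lemma biprodClosed (hS : CompleteSub C S) {X : C} (hX : X ∈ S) : BiprodClosed S :=
  ⟨hS.zero_mem_s7 hX, hS.biprod_mem_s7⟩

end CompleteSub

lemma DenseSub.exists_biprod_mem (hd : DenseSub C S) (hS : CompleteSub C S) (A : C) :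
    ∃ A', (A ⊞ A') ∈ S :=
  let ⟨_, hX, A', ⟨e⟩⟩ := hd A
  ⟨A', hS.mem_of_iso_s7 hX e⟩

end Triangulated

end TriK0

open TriK0

/-- The relation `A ~ B ↔ ∃ S_A, S_B ∈ S, A ⊕ S_A ≅ B ⊕ S_B` is an equivalence relation,
and the quotient `G_S` is an abelian group with `{A} + {B} = {A ⊕ B}`, identity `{0}`,
and `-{A} = {A'}` whenever `A ⊕ A' ∈ S`. -/
theorem quotient_monoid_is_group
    (C : Type u) [Category.{v} C] [HasZeroObject C] [Preadditive C] [HasShift C ℤ]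
    [∀ n : ℤ, (shiftFunctor C n).Additive] [Pretriangulated C] [EssentiallySmall.{w} C]
    (S : Set C) (hdense : DenseSub C S) (hcomplete : CompleteSub C S)
    (r : C → C → Prop)
    (hr : ∀ A B : C, r A B ↔ ∃ SA ∈ S, ∃ SB ∈ S, Nonempty ((A ⊞ SA) ≅ B ⊞ SB)) :
    Equivalence r ∧
    ∃ inst : AddCommGroup (Quot r), letI := inst;
      ((∀ A B : C, Quot.mk r A + Quot.mk r B = Quot.mk r (A ⊞ B)) ∧
       ((0 : Quot r) = Quot.mk r (0 : C)) ∧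
       (∀ A A' : C, (A ⊞ A') ∈ S → -(Quot.mk r A) = Quot.mk r A')) := by
  obtain ⟨X, hX, -⟩ := hdense 0
  have hS : BiprodClosed S := hcomplete.biprodClosed hX
  obtain rfl : r = StableEquiv S := funext₂ fun A B => propext (hr A B)
  let _ := quotAddCommGroup hS (hdense.exists_biprod_mem hcomplete)
  refine ⟨StableEquiv.equivalence hS, inferInstance, fun _ _ => rfl, rfl, fun _ _ h => ?_⟩
  exact neg_eq_of_add_eq_zero_right (Quot.sound (StableEquiv.of_mem hS h))
end
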